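/- arXiv:1806.10659 — 5 statements merged into one kernel-verified Lean document; each statement's English description precedes it below -/
import Mathlib

section
/- Let g be a real semisimple Lie algebra with Cartan involution σ, Killing form β, maximal abelian a ⊂ p, and m := {X ∈ k : [H,X] = 0 for all H ∈ a}. For every restricted root λ ∈ Σ and all X, Y ∈ g_λ, the element [X, σ(Y)] − β(X, σ(Y))·H_λ lies in m. -/
open LieAlgebra

/-- For `X, Y` in the root space `g_lam`, the element `⁅X, σ Y⁆ - β(X, σ Y) • H_lam`
lies in `m`. -/
theorem bracket_sub_killing_smul_mem_m
    (L : Type*) [LieRing L] [LieAlgebra ℝ L] [Module.Finite ℝ L]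
    [LieAlgebra.IsSemisimple ℝ L]
    (σ : L →ₗ[ℝ] L)
    (hσlie : ∀ x y : L, σ ⁅x, y⁆ = ⁅σ x, σ y⁆)
    (hσinv : ∀ x : L, σ (σ x) = x)
    (hσpos : ∀ x : L, x ≠ 0 → 0 < -(killingForm ℝ L x (σ x)))
    (a : LieSubalgebra ℝ L)
    (ha_p : ∀ x ∈ a, σ x = -x)
    (ha_ab : ∀ x ∈ a, ∀ y ∈ a, ⁅x, y⁆ = 0)
    (ha_max : ∀ x : L, σ x = -x → (∀ y ∈ a, ⁅x, y⁆ = 0) → x ∈ a)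
    (lam : L →ₗ[ℝ] ℝ)
    (hroot_ne : ∃ H ∈ a, lam H ≠ 0)
    (hroot : ∃ X : L, X ≠ 0 ∧ ∀ H ∈ a, ⁅H, X⁆ = lam H • X)
    (Hlam : L) (hHlam : Hlam ∈ a)
    (hHlam_def : ∀ H ∈ a, killingForm ℝ L Hlam H = lam H)
    (X Y : L)
    (hX : ∀ H ∈ a, ⁅H, X⁆ = lam H • X)
    (hY : ∀ H ∈ a, ⁅H, Y⁆ = lam H • Y) :
    σ (⁅X, σ Y⁆ - (killingForm ℝ L X (σ Y)) • Hlam)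
      = ⁅X, σ Y⁆ - (killingForm ℝ L X (σ Y)) • Hlam ∧
    ∀ H ∈ a, ⁅H, ⁅X, σ Y⁆ - (killingForm ℝ L X (σ Y)) • Hlam⁆ = 0 := by
  -- σ as a Lie algebra equivalence
  let e : L ≃ₗ⁅ℝ⁆ L :=
    { toLinearMap := σ
      map_lie' := fun {x y} => hσlie x y
      invFun := σ
      left_inv := hσinv
      right_inv := hσinv }
  have hκσ : ∀ x y : L, killingForm ℝ L (σ x) (σ y) = killingForm ℝ L x y := fun x y =>
    killingForm_of_equiv_apply e x y
  set c := killingForm ℝ L X (σ Y) with hc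
  set W := ⁅X, σ Y⁆ with hW
  -- σ Y lies in root space for -lam
  have hσY : ∀ H ∈ a, ⁅H, σ Y⁆ = -lam H • σ Y := by
    intro H hH
    have : ⁅σ H, σ Y⁆ = σ ⁅H, Y⁆ := (hσlie H Y).symm
    rw [ha_p H hH, neg_lie, hY H hH, map_smul] at this
    have := neg_eq_iff_eq_neg.mp this
    rw [this]; simp
  -- W centralizes a
  have hWa : ∀ H ∈ a, ⁅H, W⁆ = 0 := by
    intro H hH
    rw [hW, leibniz_lie, hX H hH, hσY H hH, smul_lie, lie_smul]
    module
  -- σ W centralizes a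
  have hσWa : ∀ H ∈ a, ⁅H, σ W⁆ = 0 := by
    intro H hH
    have : σ ⁅σ H, W⁆ = ⁅H, σ W⁆ := by rw [hσlie, hσinv]
    rw [← this, ha_p H hH, neg_lie, hWa H hH, neg_zero, map_zero]
  -- W - σ W is in a
  have hV : W - σ W ∈ a := by
    refine ha_max _ ?_ ?_
    · rw [map_sub, hσinv]; abel
    · intro y hy
      rw [sub_lie, ← lie_skew, hWa y hy, ← lie_skew, hσWa y hy]
      simp
  -- compute β(W, H) and β(σ W, H) for H ∈ a
  have hβW : ∀ H ∈ a, killingForm ℝ L W H = lam H * c := by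
    intro H hH
    rw [hW, LieModule.traceForm_apply_lie_apply, ← lie_skew, hσY H hH]
    simp [hc, mul_comm]
  have hβσW : ∀ H ∈ a, killingForm ℝ L (σ W) H = -(lam H * c) := by
    intro H hH
    have h1 : killingForm ℝ L (σ W) H = killingForm ℝ L W (σ H) := by
      rw [← hκσ W (σ H), hσinv]
    rw [h1, ha_p H hH, map_neg, hβW H hH]
  -- key: W - σ W = 2 c • Hlam
  have key : W - σ W = (2 * c) • Hlam := by
    set V := W - σ W - (2 * c) • Hlam with hVdef
    have hVa : V ∈ a := by
      exact a.sub_mem hV (a.smul_mem _ hHlam)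
    have hβV : killingForm ℝ L V V = 0 := by
      have : ∀ H ∈ a, killingForm ℝ L V H = 0 := by
        intro H hH
        rw [hVdef]
        simp only [map_sub, LinearMap.sub_apply, LinearMap.map_smul₂, LinearMap.smul_apply,
          smul_eq_mul]
        rw [hβW H hH, hβσW H hH, hHlam_def H hH]
        ring
      -- apply symmetry: β(V, V) with V ∈ a
      have hsym : killingForm ℝ L V V = 0 := this V hVa
      exact hsym
    have hVzero : V = 0 := by
      by_contra hne
      have := hσpos V hne
      rw [ha_p V hVa, map_neg, hβV] at this
      simp at this
    exact sub_eq_zero.mp hVzero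
  have hσW : σ W = W - (2 * c) • Hlam := by
    rw [← key]; abel
  constructor
  · rw [map_sub, map_smul, hσW, ha_p Hlam hHlam, smul_neg]
    simp only [hc, hW]
    module
  · intro H hH
    rw [lie_sub, lie_smul, hWa H hH, ha_ab H hH Hlam hHlam, smul_zero, sub_self]
end

section
/- Let g be a real semisimple Lie algebra with Cartan involution σ, Killing form β, maximal abelian a ⊂ p, and m the centralizer of a in k. For every restricted root λ ∈ Σ and every nonzero X ∈ g_λ, one has [m, X] = X^⊥(λ) = {Y ∈ g_λ : β(X, σ(Y)) = 0}. In particular g_λ = ℝX ⊕ [m, X] as an orthogonal direct sum with respect to β^σ. -/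
open LieAlgebra

/-!
For `Y ∈ m` the derivation `ad Y` commutes with `σ` and is skew for `β`, hence for `β^σ`; so
`β^σ(X, [Y, X]) = -β^σ(X, [Y, X])` and `[m, X] ⊆ X^⊥(λ)`. Conversely, let `w ∈ X^⊥(λ)` be
`β^σ`-orthogonal to `[m, X]`. Then `[σX, w] - [X, σw]` lies in `p ∩ g_0 = a` and, as `w ⊥ X`, is
`β`-orthogonal to `a`, hence vanishes. So `[X, σw] ∈ m`, and `w ⊥ [[X, σw], X]` forces
`[X, σw] = 0 = [σX, w]`. The `sl₂`-identity `β(X, σX) λ(H_λ) β(w, σw) = β([X, w], σ[X, w])` then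
has a positive left side when `w ≠ 0` and a nonpositive right side, so `w = 0`.
-/

section

variable {L : Type*} [LieRing L] [LieAlgebra ℝ L]

def restrictedRootSpace (a : LieSubalgebra ℝ L) (μ : L → ℝ) : Submodule ℝ L :=
  ⨅ H ∈ a, (ad ℝ L H : Module.End ℝ L).eigenspace (μ H)

def centralizerInK (σ : L →ₗ[ℝ] L) (a : LieSubalgebra ℝ L) : Submodule ℝ L :=
  LinearMap.eqLocus σ LinearMap.id ⊓ restrictedRootSpace a 0

structure IsMaximalAbelianInP (σ : L →ₗ[ℝ] L) (a : LieSubalgebra ℝ L) : Prop where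
  map_eq_neg : ∀ x ∈ a, σ x = -x
  lie_eq_zero : ∀ x ∈ a, ∀ y ∈ a, ⁅x, y⁆ = 0
  maximal : ∀ x : L, σ x = -x → (∀ y ∈ a, ⁅x, y⁆ = 0) → x ∈ a

structure IsCartanInvolution (σ : L →ₗ[ℝ] L) : Prop where
  map_lie : ∀ x y : L, σ ⁅x, y⁆ = ⁅σ x, σ y⁆
  involutive : ∀ x : L, σ (σ x) = x
  killingForm_pos : ∀ x : L, x ≠ 0 → 0 < -(killingForm ℝ L x (σ x))

variable {σ : L →ₗ[ℝ] L} {a : LieSubalgebra ℝ L}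

theorem mem_restrictedRootSpace {μ : L → ℝ} {z : L} :
    z ∈ restrictedRootSpace a μ ↔ ∀ H ∈ a, ⁅H, z⁆ = μ H • z := by
  simp [restrictedRootSpace]

theorem lie_mem_restrictedRootSpace_add {μ ν : L → ℝ} {x y : L}
    (hx : x ∈ restrictedRootSpace a μ) (hy : y ∈ restrictedRootSpace a ν) :
    ⁅x, y⁆ ∈ restrictedRootSpace a (μ + ν) := by
  rw [mem_restrictedRootSpace] at *
  intro H hH
  rw [leibniz_lie, hx H hH, hy H hH, smul_lie, lie_smul, Pi.add_apply, add_smul, add_comm]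

theorem mem_centralizerInK {y : L} :
    y ∈ centralizerInK σ a ↔ σ y = y ∧ ∀ H ∈ a, ⁅H, y⁆ = 0 := by
  simp [centralizerInK, mem_restrictedRootSpace]

theorem lie_mem_restrictedRootSpace_of_mem_centralizerInK {μ : L → ℝ} {x y : L}
    (hy : y ∈ centralizerInK σ a) (hx : x ∈ restrictedRootSpace a μ) :
    ⁅y, x⁆ ∈ restrictedRootSpace a μ := by
  simpa using lie_mem_restrictedRootSpace_add (Submodule.mem_inf.mp hy).2 hx

theorem killingForm_lie_apply_of_mem_restrictedRootSpace {μ : L → ℝ} {y H : L}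
    (hy : y ∈ restrictedRootSpace a μ) (hH : H ∈ a) (x : L) :
    killingForm ℝ L ⁅x, y⁆ H = -(μ H * killingForm ℝ L x y) := by
  rw [LieModule.traceForm_apply_lie_apply, ← lie_skew, mem_restrictedRootSpace.mp hy H hH,
    map_neg, map_smul, smul_eq_mul]

namespace IsCartanInvolution

def toLieEquiv (hσ : IsCartanInvolution σ) : L ≃ₗ⁅ℝ⁆ L :=
  { σ with
    map_lie' := hσ.map_lie _ _
    invFun := σ
    left_inv := hσ.involutive
    right_inv := hσ.involutive }

theorem killingForm_map_map (hσ : IsCartanInvolution σ) (x y : L) :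
    killingForm ℝ L (σ x) (σ y) = killingForm ℝ L x y :=
  killingForm_of_equiv_apply hσ.toLieEquiv x y

theorem killingForm_map_comm (hσ : IsCartanInvolution σ) (x y : L) :
    killingForm ℝ L x (σ y) = killingForm ℝ L y (σ x) := by
  rw [← hσ.killingForm_map_map, hσ.involutive, LieModule.traceForm_comm]

theorem killingForm_map_self_neg (hσ : IsCartanInvolution σ) {x : L} (hx : x ≠ 0) :
    killingForm ℝ L x (σ x) < 0 :=
  neg_pos.mp (hσ.killingForm_pos x hx)

theorem killingForm_map_self_nonpos (hσ : IsCartanInvolution σ) (x : L) :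
    killingForm ℝ L x (σ x) ≤ 0 := by
  rcases eq_or_ne x 0 with rfl | hx
  · simp
  · exact (hσ.killingForm_map_self_neg hx).le

theorem eq_zero_of_killingForm_map_self (hσ : IsCartanInvolution σ) {x : L}
    (h : killingForm ℝ L x (σ x) = 0) : x = 0 := by
  by_contra hx
  exact (hσ.killingForm_map_self_neg hx).ne h

theorem exists_add_of_orthogonal [Module.Finite ℝ L] (hσ : IsCartanInvolution σ)
    (W : Submodule ℝ L) (z : L) :
    ∃ r ∈ W, ∃ w, (∀ n ∈ W, killingForm ℝ L n (σ w) = 0) ∧ z = r + w := by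
  set B : LinearMap.BilinForm ℝ L := (killingForm ℝ L).compl₂ σ
  have hB : B.IsRefl := fun x y h ↦ by
    simpa [B, hσ.killingForm_map_comm y x] using h
  have hdisj : Disjoint W (B.orthogonal W) :=
    Submodule.disjoint_def.mpr fun x hxW hxO ↦ hσ.eq_zero_of_killingForm_map_self (hxO x hxW)
  have hz : z ∈ W ⊔ B.orthogonal W := by
    rw [((LinearMap.BilinForm.isCompl_orthogonal_iff_disjoint hB).mpr hdisj).sup_eq_top]
    exact Submodule.mem_top
  obtain ⟨r, hr, w, hw, rfl⟩ := Submodule.mem_sup.mp hz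
  exact ⟨r, hr, w, hw, rfl⟩

theorem killingForm_map_lie_eq_zero (hσ : IsCartanInvolution σ) {y : L} (hy : σ y = y) (x : L) :
    killingForm ℝ L x (σ ⁅y, x⁆) = 0 := by
  have hσyx : σ ⁅y, x⁆ = ⁅y, σ x⁆ := by rw [hσ.map_lie, hy]
  have h : killingForm ℝ L x ⁅y, σ x⁆ = -killingForm ℝ L x ⁅y, σ x⁆ := calc
    _ = -killingForm ℝ L ⁅y, x⁆ (σ x) := by
      rw [LieModule.traceForm_apply_lie_apply', LieModule.traceForm_comm, neg_neg]
    _ = -killingForm ℝ L x ⁅y, σ x⁆ := by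
      rw [hσ.killingForm_map_comm, hσyx, LieModule.traceForm_comm]
  rw [hσyx]
  linarith

theorem eq_zero_of_smul_eq_lie (hσ : IsCartanInvolution σ) {x y : L} (hx0 : x ≠ 0) {c : ℝ}
    (hy : σ y = y) (h : c • x = ⁅y, x⁆) : c = 0 := by
  have hc := hσ.killingForm_map_lie_eq_zero hy x
  rw [← h, map_smul, map_smul, smul_eq_mul] at hc
  exact (mul_eq_zero.mp hc).resolve_right (hσ.killingForm_map_self_neg hx0).ne

end IsCartanInvolution

namespace IsMaximalAbelianInP

variable {lam : L → ℝ} {Hlam : L}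

theorem mem_restrictedRootSpace_zero (ha : IsMaximalAbelianInP σ a) {H : L} (hH : H ∈ a) :
    H ∈ restrictedRootSpace a 0 :=
  mem_restrictedRootSpace.mpr fun H' hH' ↦ by simp [ha.lie_eq_zero H' hH' H hH]

theorem map_mem_restrictedRootSpace_neg (ha : IsMaximalAbelianInP σ a)
    (hσ : IsCartanInvolution σ) {μ : L → ℝ} {z : L} (hz : z ∈ restrictedRootSpace a μ) :
    σ z ∈ restrictedRootSpace a (-μ) := by
  rw [mem_restrictedRootSpace] at *
  intro H hH
  calc ⁅H, σ z⁆ = σ ⁅σ H, z⁆ := by rw [hσ.map_lie, hσ.involutive]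
    _ = (-μ) H • σ z := by
      rw [ha.map_eq_neg H hH, neg_lie, hz H hH, map_neg, map_smul, Pi.neg_apply, neg_smul]

theorem lie_map_mem_restrictedRootSpace_zero (ha : IsMaximalAbelianInP σ a)
    (hσ : IsCartanInvolution σ) {x y : L} (hx : x ∈ restrictedRootSpace a lam)
    (hy : y ∈ restrictedRootSpace a lam) : ⁅x, σ y⁆ ∈ restrictedRootSpace a 0 := by
  simpa using lie_mem_restrictedRootSpace_add hx (ha.map_mem_restrictedRootSpace_neg hσ hy)

theorem eq_zero_of_killingForm_apply_eq_zero (ha : IsMaximalAbelianInP σ a)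
    (hσ : IsCartanInvolution σ) {p : L} (hp : σ p = -p) (hp0 : p ∈ restrictedRootSpace a 0)
    (horth : ∀ H ∈ a, killingForm ℝ L p H = 0) : p = 0 := by
  have hpa : p ∈ a := ha.maximal p hp fun H hH ↦ by
    rw [← lie_skew, mem_restrictedRootSpace.mp hp0 H hH]
    simp
  apply hσ.eq_zero_of_killingForm_map_self
  rw [hp, map_neg, horth p hpa, neg_zero]

theorem apply_pos_of_killingForm_dual (ha : IsMaximalAbelianInP σ a) (hσ : IsCartanInvolution σ)
    (hHlam : Hlam ∈ a) (hHlam_def : ∀ H ∈ a, killingForm ℝ L Hlam H = lam H)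
    (hne : ∃ H ∈ a, lam H ≠ 0) : 0 < lam Hlam := by
  have hH0 : Hlam ≠ 0 := by
    rintro rfl
    obtain ⟨H, hH, hlH⟩ := hne
    exact hlH (by rw [← hHlam_def H hH, map_zero, LinearMap.zero_apply])
  have hneg := hσ.killingForm_map_self_neg hH0
  rw [ha.map_eq_neg Hlam hHlam, map_neg, hHlam_def Hlam hHlam] at hneg
  linarith

theorem lie_map_self_eq (ha : IsMaximalAbelianInP σ a) (hσ : IsCartanInvolution σ)
    (hHlam : Hlam ∈ a) (hHlam_def : ∀ H ∈ a, killingForm ℝ L Hlam H = lam H) {x : L}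
    (hx : x ∈ restrictedRootSpace a lam) :
    ⁅x, σ x⁆ = killingForm ℝ L x (σ x) • Hlam := by
  refine sub_eq_zero.mp (ha.eq_zero_of_killingForm_apply_eq_zero hσ ?_ ?_ fun H hH ↦ ?_)
  · rw [map_sub, map_smul, hσ.map_lie, hσ.involutive, ha.map_eq_neg Hlam hHlam, ← lie_skew]
    module
  · exact sub_mem (ha.lie_map_mem_restrictedRootSpace_zero hσ hx hx)
      (Submodule.smul_mem _ _ (ha.mem_restrictedRootSpace_zero hHlam))
  · rw [map_sub, LinearMap.sub_apply, killingForm_lie_apply_of_mem_restrictedRootSpace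
      (ha.map_mem_restrictedRootSpace_neg hσ hx) hH, map_smul, LinearMap.smul_apply,
      hHlam_def H hH, Pi.neg_apply, smul_eq_mul]
    ring

theorem lie_map_comm_of_killingForm_eq_zero (ha : IsMaximalAbelianInP σ a)
    (hσ : IsCartanInvolution σ) {x w : L} (hx : x ∈ restrictedRootSpace a lam)
    (hw : w ∈ restrictedRootSpace a lam) (hxw : killingForm ℝ L x (σ w) = 0) :
    ⁅σ x, w⁆ = ⁅x, σ w⁆ := by
  have hwx : killingForm ℝ L (σ x) w = 0 := by
    rw [← hσ.involutive w, hσ.killingForm_map_map, hxw]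
  refine sub_eq_zero.mp (ha.eq_zero_of_killingForm_apply_eq_zero hσ ?_ ?_ fun H hH ↦ ?_)
  · rw [map_sub, hσ.map_lie, hσ.map_lie, hσ.involutive, hσ.involutive]
    abel
  · rw [← lie_skew]
    exact sub_mem (neg_mem (ha.lie_map_mem_restrictedRootSpace_zero hσ hw hx))
      (ha.lie_map_mem_restrictedRootSpace_zero hσ hx hw)
  · rw [map_sub, LinearMap.sub_apply, killingForm_lie_apply_of_mem_restrictedRootSpace hw hH,
      killingForm_lie_apply_of_mem_restrictedRootSpace
        (ha.map_mem_restrictedRootSpace_neg hσ hw) hH, hwx, hxw]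
    simp

theorem lie_map_eq_zero_of_orthogonal (ha : IsMaximalAbelianInP σ a)
    (hσ : IsCartanInvolution σ) {x w : L} (hx : x ∈ restrictedRootSpace a lam)
    (hw : w ∈ restrictedRootSpace a lam) (hxw : killingForm ℝ L x (σ w) = 0)
    (horth : ∀ y ∈ centralizerInK σ a, killingForm ℝ L ⁅y, x⁆ (σ w) = 0) :
    ⁅σ x, w⁆ = 0 := by
  have hcomm := ha.lie_map_comm_of_killingForm_eq_zero hσ hx hw hxw
  have hfix : σ ⁅x, σ w⁆ = ⁅x, σ w⁆ := by rw [hσ.map_lie, hσ.involutive, hcomm]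
  have hy : ⁅x, σ w⁆ ∈ centralizerInK σ a :=
    Submodule.mem_inf.mpr ⟨hfix, ha.lie_map_mem_restrictedRootSpace_zero hσ hx hw⟩
  rw [hcomm]
  apply hσ.eq_zero_of_killingForm_map_self
  rw [hfix, ← LieModule.traceForm_apply_lie_apply]
  exact horth _ hy

theorem eq_zero_of_lie_map_eq_zero (ha : IsMaximalAbelianInP σ a) (hσ : IsCartanInvolution σ)
    (hHlam : Hlam ∈ a) (hHlam_def : ∀ H ∈ a, killingForm ℝ L Hlam H = lam H)
    (hlam : 0 < lam Hlam) {x w : L} (hx0 : x ≠ 0) (hx : x ∈ restrictedRootSpace a lam)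
    (hw : w ∈ restrictedRootSpace a lam) (hxw : ⁅σ x, w⁆ = 0) : w = 0 := by
  by_contra hw0
  have key : killingForm ℝ L x (σ x) * lam Hlam * killingForm ℝ L w (σ w)
      = killingForm ℝ L ⁅x, w⁆ (σ ⁅x, w⁆) := calc
    _ = killingForm ℝ L ⁅⁅x, σ x⁆, w⁆ (σ w) := by
      rw [ha.lie_map_self_eq hσ hHlam hHlam_def hx, smul_lie,
        mem_restrictedRootSpace.mp hw Hlam hHlam, smul_smul, map_smul, LinearMap.smul_apply,
        smul_eq_mul]
    _ = -killingForm ℝ L ⁅σ x, ⁅x, w⁆⁆ (σ w) := by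
      rw [lie_lie, hxw, lie_zero, zero_sub, map_neg, LinearMap.neg_apply]
    _ = killingForm ℝ L ⁅x, w⁆ (σ ⁅x, w⁆) := by
      rw [LieModule.traceForm_apply_lie_apply', neg_neg, hσ.map_lie]
  have hpos : 0 < killingForm ℝ L x (σ x) * lam Hlam * killingForm ℝ L w (σ w) :=
    mul_pos_of_neg_of_neg (mul_neg_of_neg_of_pos (hσ.killingForm_map_self_neg hx0) hlam)
      (hσ.killingForm_map_self_neg hw0)
  linarith [hσ.killingForm_map_self_nonpos ⁅x, w⁆]

theorem exists_lie_eq_of_killingForm_eq_zero [Module.Finite ℝ L]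
    (ha : IsMaximalAbelianInP σ a) (hσ : IsCartanInvolution σ)
    (hHlam : Hlam ∈ a) (hHlam_def : ∀ H ∈ a, killingForm ℝ L Hlam H = lam H)
    (hlam : 0 < lam Hlam) {x z : L} (hx0 : x ≠ 0) (hx : x ∈ restrictedRootSpace a lam)
    (hz : z ∈ restrictedRootSpace a lam) (hzx : killingForm ℝ L x (σ z) = 0) :
    ∃ y ∈ centralizerInK σ a, ⁅y, x⁆ = z := by
  set adx : L →ₗ[ℝ] L := (ad ℝ L : L →ₗ[ℝ] Module.End ℝ L).flip x
  obtain ⟨r, hr, w, hw, rfl⟩ := hσ.exists_add_of_orthogonal ((centralizerInK σ a).map adx) z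
  obtain ⟨y, hy, rfl⟩ := Submodule.mem_map.mp hr
  have hyx : adx y = ⁅y, x⁆ := rfl
  rw [hyx] at hz hzx ⊢
  have hwg : w ∈ restrictedRootSpace a lam :=
    (Submodule.add_mem_iff_right _ (lie_mem_restrictedRootSpace_of_mem_centralizerInK hy hx)).mp hz
  have hwx : killingForm ℝ L x (σ w) = 0 := by
    rwa [map_add, map_add, hσ.killingForm_map_lie_eq_zero (mem_centralizerInK.mp hy).1, zero_add]
      at hzx
  have hw0 : w = 0 := ha.eq_zero_of_lie_map_eq_zero hσ hHlam hHlam_def hlam hx0 hx hwg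
    (ha.lie_map_eq_zero_of_orthogonal hσ hx hwg hwx fun y' hy' ↦ hw _ ⟨y', hy', rfl⟩)
  exact ⟨y, hy, by rw [hw0, add_zero]⟩

theorem exists_smul_add_lie_eq [Module.Finite ℝ L]
    (ha : IsMaximalAbelianInP σ a) (hσ : IsCartanInvolution σ)
    (hHlam : Hlam ∈ a) (hHlam_def : ∀ H ∈ a, killingForm ℝ L Hlam H = lam H)
    (hlam : 0 < lam Hlam) {x z : L} (hx0 : x ≠ 0) (hx : x ∈ restrictedRootSpace a lam)
    (hz : z ∈ restrictedRootSpace a lam) :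
    ∃ c : ℝ, ∃ y ∈ centralizerInK σ a, z = c • x + ⁅y, x⁆ := by
  set c := killingForm ℝ L x (σ z) / killingForm ℝ L x (σ x)
  have hxx := (hσ.killingForm_map_self_neg hx0).ne
  obtain ⟨y, hy, hyx⟩ := ha.exists_lie_eq_of_killingForm_eq_zero hσ hHlam hHlam_def hlam hx0 hx
    (sub_mem hz (Submodule.smul_mem _ c hx)) (by
      rw [map_sub, map_smul, map_sub, map_smul, smul_eq_mul]
      exact sub_eq_zero.mpr (div_mul_cancel₀ _ hxx).symm)
  exact ⟨c, y, hy, by rw [hyx]; abel⟩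

end IsMaximalAbelianInP

end

theorem bracket_m_eq_orthogonal_and_decomp_general
    (L : Type*) [LieRing L] [LieAlgebra ℝ L] [Module.Finite ℝ L]
    (σ : L →ₗ[ℝ] L)
    (hσlie : ∀ x y : L, σ ⁅x, y⁆ = ⁅σ x, σ y⁆)
    (hσinv : ∀ x : L, σ (σ x) = x)
    (hσpos : ∀ x : L, x ≠ 0 → 0 < -(killingForm ℝ L x (σ x)))
    (a : LieSubalgebra ℝ L)
    (ha_p : ∀ x ∈ a, σ x = -x)
    (ha_ab : ∀ x ∈ a, ∀ y ∈ a, ⁅x, y⁆ = 0)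
    (ha_max : ∀ x : L, σ x = -x → (∀ y ∈ a, ⁅x, y⁆ = 0) → x ∈ a)
    (lam : L →ₗ[ℝ] ℝ)
    (hroot_ne : ∃ H ∈ a, lam H ≠ 0)
    (Hlam : L) (hHlam : Hlam ∈ a)
    (hHlam_def : ∀ H ∈ a, killingForm ℝ L Hlam H = lam H)
    (X : L) (hX0 : X ≠ 0) (hX : ∀ H ∈ a, ⁅H, X⁆ = lam H • X) :
    ({Z : L | ∃ Y : L, (σ Y = Y ∧ ∀ H ∈ a, ⁅H, Y⁆ = 0) ∧ Z = ⁅Y, X⁆}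
        = {Z : L | (∀ H ∈ a, ⁅H, Z⁆ = lam H • Z) ∧ killingForm ℝ L X (σ Z) = 0}) ∧
    (∀ Z : L, (∀ H ∈ a, ⁅H, Z⁆ = lam H • Z) →
        ∃ c : ℝ, ∃ Y : L, (σ Y = Y ∧ ∀ H ∈ a, ⁅H, Y⁆ = 0) ∧ Z = c • X + ⁅Y, X⁆) ∧
    (∀ c : ℝ, ∀ Y : L, (σ Y = Y ∧ ∀ H ∈ a, ⁅H, Y⁆ = 0) → c • X = ⁅Y, X⁆ → c = 0) := by
  have hσ : IsCartanInvolution σ := ⟨hσlie, hσinv, hσpos⟩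
  have ha : IsMaximalAbelianInP σ a := ⟨ha_p, ha_ab, ha_max⟩
  have hlam : 0 < lam Hlam := ha.apply_pos_of_killingForm_dual hσ hHlam hHlam_def hroot_ne
  have hXg : X ∈ restrictedRootSpace a lam := mem_restrictedRootSpace.mpr hX
  simp only [← mem_centralizerInK, ← mem_restrictedRootSpace]
  refine ⟨Set.ext fun Z ↦ ⟨?_, ?_⟩, fun Z hZ ↦ ?_, fun c Y hY ↦ ?_⟩
  · rintro ⟨Y, hY, rfl⟩
    exact ⟨lie_mem_restrictedRootSpace_of_mem_centralizerInK hY hXg,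
      hσ.killingForm_map_lie_eq_zero (mem_centralizerInK.mp hY).1 X⟩
  · rintro ⟨hZ, hZX⟩
    obtain ⟨Y, hY, rfl⟩ :=
      ha.exists_lie_eq_of_killingForm_eq_zero hσ hHlam hHlam_def hlam hX0 hXg hZ hZX
    exact ⟨Y, hY, rfl⟩
  · obtain ⟨c, Y, hY, rfl⟩ := ha.exists_smul_add_lie_eq hσ hHlam hHlam_def hlam hX0 hXg hZ
    exact ⟨c, Y, hY, rfl⟩
  · exact hσ.eq_zero_of_smul_eq_lie hX0 (mem_centralizerInK.mp hY).1

/-- For nonzero `X ∈ g_lam`: `⁅m, X⁆ = X^⊥(lam)` and `g_lam = ℝ X ⊕ ⁅m, X⁆`. -/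
theorem bracket_m_eq_orthogonal_and_decomp
    (L : Type*) [LieRing L] [LieAlgebra ℝ L] [Module.Finite ℝ L]
    [LieAlgebra.IsSemisimple ℝ L]
    (σ : L →ₗ[ℝ] L)
    (hσlie : ∀ x y : L, σ ⁅x, y⁆ = ⁅σ x, σ y⁆)
    (hσinv : ∀ x : L, σ (σ x) = x)
    (hσpos : ∀ x : L, x ≠ 0 → 0 < -(killingForm ℝ L x (σ x)))
    (a : LieSubalgebra ℝ L)
    (ha_p : ∀ x ∈ a, σ x = -x)
    (ha_ab : ∀ x ∈ a, ∀ y ∈ a, ⁅x, y⁆ = 0)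
    (ha_max : ∀ x : L, σ x = -x → (∀ y ∈ a, ⁅x, y⁆ = 0) → x ∈ a)
    (lam : L →ₗ[ℝ] ℝ)
    (hroot_ne : ∃ H ∈ a, lam H ≠ 0)
    (hroot : ∃ X : L, X ≠ 0 ∧ ∀ H ∈ a, ⁅H, X⁆ = lam H • X)
    (Hlam : L) (hHlam : Hlam ∈ a)
    (hHlam_def : ∀ H ∈ a, killingForm ℝ L Hlam H = lam H)
    (X : L) (hX0 : X ≠ 0) (hX : ∀ H ∈ a, ⁅H, X⁆ = lam H • X) :
    ({Z : L | ∃ Y : L, (σ Y = Y ∧ ∀ H ∈ a, ⁅H, Y⁆ = 0) ∧ Z = ⁅Y, X⁆}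
        = {Z : L | (∀ H ∈ a, ⁅H, Z⁆ = lam H • Z) ∧ killingForm ℝ L X (σ Z) = 0}) ∧
    (∀ Z : L, (∀ H ∈ a, ⁅H, Z⁆ = lam H • Z) →
        ∃ c : ℝ, ∃ Y : L, (σ Y = Y ∧ ∀ H ∈ a, ⁅H, Y⁆ = 0) ∧ Z = c • X + ⁅Y, X⁆) ∧
    (∀ c : ℝ, ∀ Y : L, (σ Y = Y ∧ ∀ H ∈ a, ⁅H, Y⁆ = 0) → c • X = ⁅Y, X⁆ → c = 0) :=
  bracket_m_eq_orthogonal_and_decomp_general L σ hσlie hσinv hσpos a ha_p ha_ab ha_max lam hroot_ne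
    Hlam hHlam hHlam_def X hX0 hX
end

section
/- Let g, σ, β, a, m, Σ be as in the standard restricted root setup. Fix λ ∈ Σ, a nonzero X ∈ g_λ, and X' ∈ g_λ with β(X, σ(X')) = 0, and set X'' := [[X, X'], σ(X)]. Then [X, X''] = −2·λ(H_λ)·β(X, σ(X))·[X, X']. -/
open LieAlgebra

/-- `⁅X, X''⁆ = -2 lam(H_lam) β(X, σ X) ⁅X, X'⁆` where `X'' = ⁅⁅X, X'⁆, σ X⁆`. -/
theorem bracket_X_Xpp_eq
    (L : Type*) [LieRing L] [LieAlgebra ℝ L] [Module.Finite ℝ L]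
    [LieAlgebra.IsSemisimple ℝ L]
    (σ : L →ₗ[ℝ] L)
    (hσlie : ∀ x y : L, σ ⁅x, y⁆ = ⁅σ x, σ y⁆)
    (hσinv : ∀ x : L, σ (σ x) = x)
    (hσpos : ∀ x : L, x ≠ 0 → 0 < -(killingForm ℝ L x (σ x)))
    (a : LieSubalgebra ℝ L)
    (ha_p : ∀ x ∈ a, σ x = -x)
    (ha_ab : ∀ x ∈ a, ∀ y ∈ a, ⁅x, y⁆ = 0)
    (ha_max : ∀ x : L, σ x = -x → (∀ y ∈ a, ⁅x, y⁆ = 0) → x ∈ a)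
    (lam : L →ₗ[ℝ] ℝ)
    (hroot_ne : ∃ H ∈ a, lam H ≠ 0)
    (hroot : ∃ X : L, X ≠ 0 ∧ ∀ H ∈ a, ⁅H, X⁆ = lam H • X)
    (Hlam : L) (hHlam : Hlam ∈ a)
    (hHlam_def : ∀ H ∈ a, killingForm ℝ L Hlam H = lam H)
    (h3lam : ∀ Z : L, (∀ H ∈ a, ⁅H, Z⁆ = (3 * lam H) • Z) → Z = 0)
    (X : L) (hX0 : X ≠ 0) (hX : ∀ H ∈ a, ⁅H, X⁆ = lam H • X)
    (X' : L) (hX' : ∀ H ∈ a, ⁅H, X'⁆ = lam H • X')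
    (horth : killingForm ℝ L X (σ X') = 0) :
    ⁅X, ⁅⁅X, X'⁆, σ X⁆⁆
      = (-2 * lam Hlam * killingForm ℝ L X (σ X)) • ⁅X, X'⁆ := by
  set κ := killingForm ℝ L with hκ
  set Y := σ X with hYdef
  -- eigen relation for Y = σ X
  have hY : ∀ H ∈ a, ⁅H, Y⁆ = (-lam H) • Y := by
    intro H hH
    have h1 : lam H • Y = -⁅H, Y⁆ := by
      rw [← map_smul, ← hX H hH, hσlie, ha_p H hH, neg_lie]
    rw [neg_smul, h1, neg_neg]
  -- Z := ⁅X, Y⁆ lies in a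
  have hZmem : ⁅X, Y⁆ ∈ a := by
    apply ha_max
    · rw [hσlie, hσinv, ← lie_skew]
    · intro H hH
      have h2 : ⁅H, ⁅X, Y⁆⁆ = 0 := by
        rw [leibniz_lie, hX H hH, hY H hH, smul_lie, lie_smul, neg_smul,
          add_neg_cancel]
      rw [← lie_skew, h2, neg_zero]
  -- computation of κ ⁅X,Y⁆ H for H ∈ a
  have hZH : ∀ H ∈ a, κ ⁅X, Y⁆ H = κ X Y * lam H := by
    intro H hH
    rw [hκ, LieModule.traceForm_apply_lie_apply]
    have hYH : ⁅Y, H⁆ = lam H • Y := by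
      rw [← lie_skew, hY H hH, neg_smul, neg_neg]
    rw [hYH, map_smul, smul_eq_mul, mul_comm]
  have hWmem : ⁅X, Y⁆ - κ X Y • Hlam ∈ a := a.sub_mem hZmem (a.smul_mem _ hHlam)
  have hWorth : ∀ H ∈ a, κ (⁅X, Y⁆ - κ X Y • Hlam) H = 0 := by
    intro H hH
    rw [map_sub, LinearMap.sub_apply, hZH H hH, map_smul, LinearMap.smul_apply,
      hHlam_def H hH, smul_eq_mul, sub_self]
  -- hence ⁅X, Y⁆ = κ X Y • Hlam
  have hZ : ⁅X, Y⁆ = κ X Y • Hlam := by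
    have hW0 : ⁅X, Y⁆ - κ X Y • Hlam = 0 := by
      by_contra h
      have hpos := hσpos _ h
      rw [ha_p _ hWmem, map_neg, hWorth _ hWmem, neg_zero, neg_zero] at hpos
      exact lt_irrefl 0 hpos
    exact sub_eq_zero.mp hW0
  -- ⁅X, X'⁆ has eigenvalue 2 lam
  have hU : ∀ H ∈ a, ⁅H, ⁅X, X'⁆⁆ = (2 * lam H) • ⁅X, X'⁆ := by
    intro H hH
    rw [leibniz_lie, hX H hH, hX' H hH, smul_lie, lie_smul, ← add_smul]
    ring_nf
  -- ⁅X, ⁅X, X'⁆⁆ has eigenvalue 3 lam, hence vanishes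
  have hV : ⁅X, ⁅X, X'⁆⁆ = 0 := by
    apply h3lam
    intro H hH
    have h3 : ⁅H, ⁅X, ⁅X, X'⁆⁆⁆ = ⁅⁅H, X⁆, ⁅X, X'⁆⁆ + ⁅X, ⁅H, ⁅X, X'⁆⁆⁆ :=
      leibniz_lie H X ⁅X, X'⁆
    rw [hX H hH, hU H hH, smul_lie, lie_smul, ← add_smul] at h3
    rw [h3]
    congr 1
    ring
  -- final computation via the Jacobi identity
  calc ⁅X, ⁅⁅X, X'⁆, Y⁆⁆
      = ⁅⁅X, ⁅X, X'⁆⁆, Y⁆ + ⁅⁅X, X'⁆, ⁅X, Y⁆⁆ := by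
        rw [leibniz_lie]
    _ = ⁅⁅X, X'⁆, ⁅X, Y⁆⁆ := by rw [hV, zero_lie, zero_add]
    _ = κ X Y • ⁅⁅X, X'⁆, Hlam⁆ := by rw [hZ, lie_smul]
    _ = κ X Y • (-((2 * lam Hlam) • ⁅X, X'⁆)) := by
        rw [← lie_skew, hU Hlam hHlam]
    _ = (-2 * lam Hlam * κ X Y) • ⁅X, X'⁆ := by
        rw [smul_neg, smul_smul, ← neg_smul]
        congr 1
        ring
end

section
/- Let g be a real semisimple Lie algebra with restricted root space decomposition as above, and let m be the centralizer of a in k. If a restricted root λ ∈ Σ satisfies dim(g_λ) = 1, then [m, X] = 0 for every X ∈ g_λ, i.e. m centralizes g_λ. -/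
open LieAlgebra

/-- The restricted root space of a linear form `lam` relative to `a`. -/
def rootSpace {L : Type*} [LieRing L] [LieAlgebra ℝ L] (a : LieSubalgebra ℝ L)
    (lam : L →ₗ[ℝ] ℝ) : Submodule ℝ L where
  carrier := {X : L | ∀ H ∈ a, ⁅H, X⁆ = lam H • X}
  add_mem' := fun hx hy => by
    intro H hH
    rw [lie_add, hx H hH, hy H hH, smul_add]
  zero_mem' := by intro H hH; simp
  smul_mem' := fun c x hx => by
    intro H hH
    rw [lie_smul, hx H hH, smul_comm]

/-- If a restricted root space is one-dimensional, then `m` centralizes it. -/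
theorem m_centralizes_of_finrank_one
    (L : Type*) [LieRing L] [LieAlgebra ℝ L] [Module.Finite ℝ L]
    [LieAlgebra.IsSemisimple ℝ L]
    (σ : L →ₗ[ℝ] L)
    (hσlie : ∀ x y : L, σ ⁅x, y⁆ = ⁅σ x, σ y⁆)
    (hσinv : ∀ x : L, σ (σ x) = x)
    (hσpos : ∀ x : L, x ≠ 0 → 0 < -(killingForm ℝ L x (σ x)))
    (a : LieSubalgebra ℝ L)
    (ha_p : ∀ x ∈ a, σ x = -x)
    (ha_ab : ∀ x ∈ a, ∀ y ∈ a, ⁅x, y⁆ = 0)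
    (ha_max : ∀ x : L, σ x = -x → (∀ y ∈ a, ⁅x, y⁆ = 0) → x ∈ a)
    (lam : L →ₗ[ℝ] ℝ)
    (hroot_ne : ∃ H ∈ a, lam H ≠ 0)
    (hroot : ∃ X : L, X ≠ 0 ∧ ∀ H ∈ a, ⁅H, X⁆ = lam H • X)
    (Hlam : L) (hHlam : Hlam ∈ a)
    (hHlam_def : ∀ H ∈ a, killingForm ℝ L Hlam H = lam H)
    (hdim : Module.finrank ℝ (rootSpace a lam) = 1)
    (X : L) (hX : ∀ H ∈ a, ⁅H, X⁆ = lam H • X)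
    (Y : L) (hYk : σ Y = Y) (hYa : ∀ H ∈ a, ⁅H, Y⁆ = 0) :
    ⁅Y, X⁆ = 0 := by
  by_cases hX0 : X = 0
  · simp [hX0]
  have hmem : (⁅Y, X⁆ : L) ∈ rootSpace a lam := by
    intro H hH
    rw [leibniz_lie, hYa H hH, hX H hH, zero_lie, zero_add, lie_smul]
  have hvne : (⟨X, hX⟩ : rootSpace a lam) ≠ 0 := by
    simp [Subtype.ext_iff, hX0]
  obtain ⟨c, hc⟩ := (finrank_eq_one_iff_of_nonzero' (⟨X, hX⟩ : rootSpace a lam)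
    hvne).mp hdim ⟨⁅Y, X⁆, hmem⟩
  have hcX : c • X = ⁅Y, X⁆ := congrArg Subtype.val hc
  have hσX : σ ⁅Y, X⁆ = ⁅Y, σ X⁆ := by rw [hσlie, hYk]
  have h1 : killingForm ℝ L ⁅Y, X⁆ (σ X) = - killingForm ℝ L X ⁅Y, σ X⁆ :=
    LieModule.traceForm_apply_lie_apply' ℝ L L Y X (σ X)
  have h2 : ⁅Y, σ X⁆ = c • σ X := by
    rw [← hσX, ← hcX, map_smul]
  have h3 : c * killingForm ℝ L X (σ X) = - (c * killingForm ℝ L X (σ X)) := by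
    have := h1
    rw [← hcX, h2] at this
    simpa using this
  have hBne : killingForm ℝ L X (σ X) ≠ 0 := by
    have := hσpos X hX0
    intro h
    rw [h] at this
    simp at this
  have hc0 : c = 0 := by
    have : 2 * (c * killingForm ℝ L X (σ X)) = 0 := by linarith
    rcases mul_eq_zero.mp this with h | h
    · norm_num at h
    · exact (mul_eq_zero.mp h).resolve_right hBne
  rw [← hcX, hc0, zero_smul]
end

section
/- Let g be a real semisimple Lie algebra with Cartan involution σ, maximal abelian a ⊂ p, and m the centralizer of a in k. If m = 0, then every restricted root space g_λ (λ ∈ Σ) is one-dimensional. -/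
open LieAlgebra

lemma mem_rootSpace_iff {L : Type*} [LieRing L] [LieAlgebra ℝ L] (a : LieSubalgebra ℝ L)
    (lam : L →ₗ[ℝ] ℝ) (Y : L) :
    Y ∈ rootSpace a lam ↔ ∀ H ∈ a, ⁅H, Y⁆ = lam H • Y := Iff.rfl

/-- If `m = 0`, then every restricted root space is one-dimensional. -/
theorem finrank_rootSpace_eq_one_of_m_trivial
    (L : Type*) [LieRing L] [LieAlgebra ℝ L] [Module.Finite ℝ L]
    [LieAlgebra.IsSemisimple ℝ L]
    (σ : L →ₗ[ℝ] L)
    (hσlie : ∀ x y : L, σ ⁅x, y⁆ = ⁅σ x, σ y⁆)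
    (hσinv : ∀ x : L, σ (σ x) = x)
    (hσpos : ∀ x : L, x ≠ 0 → 0 < -(killingForm ℝ L x (σ x)))
    (a : LieSubalgebra ℝ L)
    (ha_p : ∀ x ∈ a, σ x = -x)
    (ha_ab : ∀ x ∈ a, ∀ y ∈ a, ⁅x, y⁆ = 0)
    (ha_max : ∀ x : L, σ x = -x → (∀ y ∈ a, ⁅x, y⁆ = 0) → x ∈ a)
    (hm : ∀ x : L, σ x = x → (∀ H ∈ a, ⁅H, x⁆ = 0) → x = 0) :
    ∀ lam : L →ₗ[ℝ] ℝ,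
      (∃ H ∈ a, lam H ≠ 0) →
      (∃ X : L, X ≠ 0 ∧ ∀ H ∈ a, ⁅H, X⁆ = lam H • X) →
      Module.finrank ℝ (rootSpace a lam) = 1 := by
  classical
  intro lam hlam hX
  obtain ⟨H₀, hH₀a, hH₀⟩ := hlam
  obtain ⟨X, hX0, hXroot⟩ := hX
  set B := killingForm ℝ L with hB
  -- Killing form invariance under the bracket
  have hinv : ∀ x y z : L, B ⁅x, y⁆ z = B x ⁅y, z⁆ := fun x y z =>
    LieModule.traceForm_apply_lie_apply ℝ L L x y z
  have hcomm : ∀ x y : L, B x y = B y x := fun x y => LieModule.traceForm_comm ℝ L L x y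
  -- σ-invariance of the Killing form
  have hBσ : ∀ x y : L, B (σ x) (σ y) = B x y := by
    intro x y
    let e : L ≃ₗ[ℝ] L := LinearEquiv.ofLinear σ σ
      (by ext z; simp [hσinv]) (by ext z; simp [hσinv])
    have key : (ad ℝ L (σ x)) ∘ₗ (ad ℝ L (σ y)) = e.conj ((ad ℝ L x) ∘ₗ (ad ℝ L y)) := by
      ext z
      simp only [LinearMap.comp_apply, LieAlgebra.ad_apply, LinearEquiv.conj_apply,
        LinearMap.coe_comp, Function.comp_apply, LinearEquiv.coe_coe]
      have he : ∀ w : L, e w = σ w := fun w => rfl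
      have hes : ∀ w : L, e.symm w = σ w := fun w => rfl
      rw [he, hσlie, hσlie, hes, hσinv]
    rw [hB, killingForm_apply_apply, killingForm_apply_apply, key, LinearMap.trace_conj']
  -- positivity of B on a
  have hpos_a : ∀ h ∈ a, h ≠ 0 → 0 < B h h := by
    intro h hha hne
    have := hσpos h hne
    rw [ha_p h hha] at this
    simpa using this
  -- σ maps the λ-rootspace to the (-λ)-rootspace
  have hσroot : ∀ Z : L, (∀ H ∈ a, ⁅H, Z⁆ = lam H • Z) →
      ∀ H ∈ a, ⁅H, σ Z⁆ = -(lam H) • σ Z := by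
    intro Z hZ H hHa
    have h1 : σ ⁅σ H, Z⁆ = ⁅H, σ Z⁆ := by rw [hσlie, hσinv]
    have h2 : ⁅σ H, Z⁆ = -(lam H • Z) := by rw [ha_p H hHa, neg_lie, hZ H hHa]
    rw [← h1, h2]
    simp
  -- if U ∈ g₋λ and V ∈ gλ then ⁅U,V⁆ ∈ a
  have hkey : ∀ U V : L, (∀ H ∈ a, ⁅H, U⁆ = -(lam H) • U) →
      (∀ H ∈ a, ⁅H, V⁆ = lam H • V) → ⁅U, V⁆ ∈ a := by
    intro U V hU hV
    set W := ⁅U, V⁆ with hW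
    have hW0 : ∀ H ∈ a, ⁅H, W⁆ = 0 := by
      intro H hHa
      rw [hW, leibniz_lie, hU H hHa, hV H hHa, neg_smul, neg_lie, smul_lie, lie_smul]
      abel
    have hplus : W + σ W = 0 := by
      apply hm
      · rw [map_add, hσinv]; abel
      · intro H hHa
        have : σ ⁅σ H, W⁆ = ⁅H, σ W⁆ := by rw [hσlie, hσinv]
        have h2 : ⁅σ H, W⁆ = 0 := by rw [ha_p H hHa, neg_lie, hW0 H hHa, neg_zero]
        rw [lie_add, hW0 H hHa, ← this, h2, map_zero, zero_add]
    have hσW : σ W = -W := by linear_combination (norm := module) hplus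
    exact ha_max W hσW (fun y hy => by rw [← lie_skew, hW0 y hy, neg_zero])
  -- if moreover B U V = 0 then ⁅U,V⁆ = 0
  have hzero : ∀ U V : L, (∀ H ∈ a, ⁅H, U⁆ = -(lam H) • U) →
      (∀ H ∈ a, ⁅H, V⁆ = lam H • V) → B U V = 0 → ⁅U, V⁆ = 0 := by
    intro U V hU hV hBUV
    have hWa : ⁅U, V⁆ ∈ a := hkey U V hU hV
    have hBW : ∀ H ∈ a, B ⁅U, V⁆ H = 0 := by
      intro H hHa
      rw [hinv]
      have : ⁅V, H⁆ = -(lam H • V) := by rw [← lie_skew, hV H hHa]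
      rw [this]
      simp [hBUV]
    by_contra hne
    have := hpos_a ⁅U, V⁆ hWa hne
    rw [hBW ⁅U, V⁆ hWa] at this
    exact lt_irrefl 0 this
  -- σX ∈ g₋λ
  have hσX : ∀ H ∈ a, ⁅H, σ X⁆ = -(lam H) • σ X := hσroot X hXroot
  -- the coroot-like element
  set HX : L := ⁅X, σ X⁆ with hHXdef
  have hskew : ⁅σ X, X⁆ = -HX := by
    rw [hHXdef, ← neg_neg ⁅σ X, X⁆, lie_skew]
  have hHXa : HX ∈ a := by
    have h1 : ⁅σ X, X⁆ ∈ a := hkey (σ X) X hσX hXroot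
    rw [hskew] at h1
    simpa using neg_mem h1
  have hnX : 0 < -(B X (σ X)) := hσpos X hX0
  have hBHX : ∀ H ∈ a, B HX H = lam H * B X (σ X) := by
    intro H hHa
    rw [hHXdef, hinv]
    have : ⁅σ X, H⁆ = -(-(lam H) • σ X) := by rw [← lie_skew, hσX H hHa]
    rw [this]
    simp [mul_comm]
  have hHX0 : HX ≠ 0 := by
    intro h
    have := hBHX H₀ hH₀a
    rw [h, map_zero, LinearMap.zero_apply] at this
    have hBX : B X (σ X) ≠ 0 := by
      intro h'
      rw [h'] at hnX
      simp at hnX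
    exact hBX (by
      rcases mul_eq_zero.mp this.symm with h' | h'
      · exact absurd h' hH₀
      · exact h')
  have hc : 0 < -(lam HX) := by
    have h1 : 0 < B HX HX := hpos_a HX hHXa hHX0
    have h2 : B HX HX = lam HX * B X (σ X) := hBHX HX hHXa
    nlinarith [hnX]
  -- main claim: Y ∈ gλ with B (σX) Y = 0 is 0
  have main : ∀ Y : L, (∀ H ∈ a, ⁅H, Y⁆ = lam H • Y) → B (σ X) Y = 0 → Y = 0 := by
    intro Y hYroot hBY
    have hσXY : ⁅σ X, Y⁆ = 0 := hzero (σ X) Y hσX hYroot hBY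
    set Yk : ℕ → L := fun k => ((ad ℝ L X) ^ k) Y with hYkdef
    have hYk0 : Yk 0 = Y := rfl
    have hYksucc : ∀ k, Yk (k + 1) = ⁅X, Yk k⁆ := by
      intro k
      rw [hYkdef]
      simp only [pow_succ', Module.End.mul_apply, LieAlgebra.ad_apply]
    have hroot : ∀ k, ∀ H ∈ a, ⁅H, Yk k⁆ = (((k : ℝ) + 1) * lam H) • Yk k := by
      intro k
      induction k with
      | zero => intro H hHa; rw [hYk0]; rw [hYroot H hHa]; norm_num
      | succ n ih =>
        intro H hHa
        rw [hYksucc n, leibniz_lie, hXroot H hHa, ih H hHa, smul_lie, lie_smul, ← add_smul]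
        push_cast
        ring_nf
    have hlower : ∀ k, ∃ μ : ℝ, 0 < μ ∧ ⁅σ X, Yk (k + 1)⁆ = μ • Yk k := by
      intro k
      induction k with
      | zero =>
        refine ⟨-(lam HX), hc, ?_⟩
        rw [hYksucc 0, hYk0, leibniz_lie, hσXY, lie_zero, add_zero, hskew,
          neg_lie, hYroot HX hHXa]
        simp
      | succ n ih =>
        obtain ⟨μ, hμ, hμeq⟩ := ih
        refine ⟨((n : ℝ) + 2) * (-(lam HX)) + μ, by positivity, ?_⟩
        rw [hYksucc (n + 1), leibniz_lie, hμeq, lie_smul, ← hYksucc n,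
          hskew, neg_lie, hroot (n + 1) HX hHXa]
        push_cast
        rw [add_smul]
        ring_nf
        module
    have hfin : ∃ N, Yk N = 0 := by
      by_contra hnone
      push_neg at hnone
      have hli : LinearIndependent ℝ Yk := by
        apply Module.End.eigenvectors_linearIndependent' (ad ℝ L H₀)
          (fun k : ℕ => ((k : ℝ) + 1) * lam H₀)
        · intro i j hij
          simp only at hij
          have h2 : ((i : ℝ) + 1) = ((j : ℝ) + 1) := mul_right_cancel₀ hH₀ hij
          exact_mod_cast (by linarith : (i : ℝ) = j)
        · intro k
          constructor
          · rw [Module.End.mem_eigenspace_iff]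
            show ⁅H₀, Yk k⁆ = _
            rw [hroot k H₀ hH₀a]
          · exact hnone k
      exact Module.Finite.not_linearIndependent_of_infinite Yk hli
    have hN := Nat.find_spec hfin
    set N := Nat.find hfin with hNdef
    match hN' : N with
    | 0 => exact hYk0 ▸ hN
    | M + 1 =>
      exfalso
      obtain ⟨μ, hμ, hμeq⟩ := hlower M
      rw [hN, lie_zero] at hμeq
      have hYM : Yk M = 0 := by
        have := hμeq.symm
        rcases smul_eq_zero.mp this with h | h
        · exact absurd h (ne_of_gt hμ)
        · exact h
      have : M < N := by rw [hN']; omega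
      exact Nat.find_min hfin this hYM
  -- conclude: rootSpace = span {X}
  have hBXX : B (σ X) X ≠ 0 := by
    rw [hcomm]
    intro h
    rw [h] at hnX
    simp at hnX
  have hspan : rootSpace a lam = Submodule.span ℝ {X} := by
    apply le_antisymm
    · intro Y hY
      rw [mem_rootSpace_iff] at hY
      set t : ℝ := B (σ X) Y / B (σ X) X with ht
      have hY' : Y - t • X ∈ rootSpace a lam := by
        apply Submodule.sub_mem
        · exact hY
        · exact Submodule.smul_mem _ _ hXroot
      have hBY' : B (σ X) (Y - t • X) = 0 := by
        rw [map_sub, map_smul, ht, smul_eq_mul, div_mul_cancel₀ _ hBXX, sub_self]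
      have := main (Y - t • X) (by rw [mem_rootSpace_iff] at hY'; exact hY') hBY'
      have hYt : Y = t • X := by linear_combination (norm := module) this
      rw [hYt]
      exact Submodule.smul_mem _ _ (Submodule.mem_span_singleton_self X)
    · rw [Submodule.span_le, Set.singleton_subset_iff]
      exact hXroot
  rw [hspan]
  exact finrank_span_singleton hX0
end
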